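/- arXiv:2412.15919 — 4 statements merged into one kernel-verified Lean document; each statement's English description precedes it below -/
import Mathlib

section
/- For any element w of a Coxeter group acting on the root system via the Tits representation, the set of positive real roots α with w·α a negative root is finite; its cardinality equals the Coxeter length of w. -/
/-!
STATEMENT 1: For any element w of a Coxeter group acting on the root system via the Tits
representation, the set of positive real roots α with w·α a negative root is finite, and its
cardinality equals the Coxeter length of w.
-/

noncomputable def coxEntry {B : Type*} (M : CoxeterMatrix B) (s t : B) : ℝ :=
  if M s t = 0 then -2 else -2 * Real.cos (Real.pi / (M s t))

noncomputable def coxForm {B : Type*} [Fintype B] (M : CoxeterMatrix B) (v w : B → ℝ) : ℝ :=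
  ∑ s, ∑ t, v s * w t * coxEntry M s t

/-- The simple root `α_s` in `RΛ ≅ (B → ℝ)`. -/
noncomputable def simpleRoot {B : Type*} [DecidableEq B] (s : B) : B → ℝ := Pi.single s 1

/-- The set of real roots: the `W`-orbit of the simple roots under the Tits representation. -/
def rootSet {B : Type*} [DecidableEq B] {W : Type*} [Group W]
    (ρ : W →* ((B → ℝ) ≃ₗ[ℝ] (B → ℝ))) : Set (B → ℝ) :=
  {v | ∃ (w : W) (s : B), v = ρ w (simpleRoot s)}

/-- The set of positive real roots: roots lying in the nonnegative span of the simple roots. -/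
def posRootSet {B : Type*} [DecidableEq B] {W : Type*} [Group W]
    (ρ : W →* ((B → ℝ) ≃ₗ[ℝ] (B → ℝ))) : Set (B → ℝ) :=
  {v ∈ rootSet ρ | ∀ i, 0 ≤ v i}

/-- The set of negative real roots. -/
def negRootSet {B : Type*} [DecidableEq B] {W : Type*} [Group W]
    (ρ : W →* ((B → ℝ) ≃ₗ[ℝ] (B → ℝ))) : Set (B → ℝ) :=
  {v | -v ∈ posRootSet ρ}

/-!
Humphreys, *Reflection groups and Coxeter groups*, §5.4–5.6. The heart of the matter is that
`ℓ(w s) > ℓ(w)` forces `w α_s ≥ 0`. By induction on `ℓ(w)`: pick a right descent `t` of `w` and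
write `w = v · x` with `x` an alternating word in `s, t` ending in `t` and `ℓ(w) = ℓ(v) + ℓ(x)`,
with `ℓ(v)` minimal. Then `v` ascends on both `s` and `t`, and `x` is shorter than `m(s,t)`, so in
the rank-two picture `x α_s` is a combination of `α_s` and `α_t` whose coefficients are values of
Chebyshev polynomials `U_n(cos (π / m))`, `n < m`, hence nonnegative.

Consequently every root is positive or negative. Roots have norm `2` for the invariant form, so a
positive root made negative by `s` is a positive multiple of `α_s`, hence `α_s` itself: `s`
permutes `Φ⁺ ∖ {α_s}`. Thus if `ℓ(w s) > ℓ(w)`, the inversion set of `w s` is `α_s` together with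
the image under `s` of that of `w`, and induction on the length gives the count.
-/

section CoxeterForm

variable {B : Type*} (M : CoxeterMatrix B)

theorem coxEntry_comm (s t : B) : coxEntry M s t = coxEntry M t s := by
  rw [coxEntry, coxEntry, M.symmetric]

theorem coxEntry_self (s : B) : coxEntry M s s = 2 := by
  simp [coxEntry]

variable [Fintype B]

theorem coxForm_comm (v w : B → ℝ) : coxForm M v w = coxForm M w v := by
  rw [coxForm, coxForm, Finset.sum_comm]
  exact Finset.sum_congr rfl fun s _ => Finset.sum_congr rfl fun t _ => by
    rw [coxEntry_comm]; ring

variable [DecidableEq B]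

noncomputable def coxBilin : LinearMap.BilinForm ℝ (B → ℝ) :=
  Matrix.toLinearMap₂' ℝ (Matrix.of (coxEntry M))

theorem coxBilin_apply (v w : B → ℝ) : coxBilin M v w = coxForm M v w := by
  simp only [coxBilin, Matrix.toLinearMap₂'_apply, coxForm, Matrix.of_apply]
  exact Finset.sum_congr rfl fun _ _ => Finset.sum_congr rfl fun _ _ => by ring

theorem coxForm_smul_self (c : ℝ) (α : B → ℝ) :
    coxForm M (c • α) (c • α) = c ^ 2 * coxForm M α α := by
  simp only [← coxBilin_apply, map_smul, LinearMap.smul_apply, smul_eq_mul]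
  ring

theorem coxForm_sub_smul_self (x α : B → ℝ) (hα : coxForm M α α = 2) :
    coxForm M (x - coxForm M α x • α) (x - coxForm M α x • α) = coxForm M x x := by
  simp only [← coxBilin_apply, map_sub, map_smul, LinearMap.sub_apply, LinearMap.smul_apply,
    smul_eq_mul] at hα ⊢
  rw [coxBilin_apply M x α, coxForm_comm M x α, ← coxBilin_apply, hα]
  ring

theorem coxForm_simpleRoot_simpleRoot (s t : B) :
    coxForm M (simpleRoot s) (simpleRoot t) = coxEntry M s t := by
  simp [coxForm, simpleRoot, Pi.single_apply]

end CoxeterForm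

section Chebyshev

open Polynomial.Chebyshev Real

theorem Polynomial.Chebyshev.U_real_cos_pi_div_nonneg {m : ℕ} (hm : 2 ≤ m) {n : ℤ}
    (hn₁ : -1 ≤ n) (hn₂ : n < m) : 0 ≤ (U ℝ n).eval (cos (π / m)) := by
  have hm' : (2 : ℝ) ≤ m := by exact_mod_cast hm
  have hsin : 0 < sin (π / m) := sin_pos_of_pos_of_lt_pi (by positivity) <| by
    rw [div_lt_iff₀ (by linarith)]; nlinarith [pi_pos]
  have hsin' : 0 ≤ sin ((n + 1) * (π / m)) := by
    have h₁ : (0 : ℝ) ≤ n + 1 := by exact_mod_cast (by omega : (0 : ℤ) ≤ n + 1)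
    have h₂ : (n : ℝ) + 1 ≤ m := by exact_mod_cast (by omega : n + 1 ≤ (m : ℤ))
    refine sin_nonneg_of_nonneg_of_le_pi (by positivity) ?_
    rw [mul_div_assoc', div_le_iff₀ (by linarith)]; nlinarith [pi_pos]
  rw [← U_real_cos] at hsin'
  exact nonneg_of_mul_nonneg_left hsin' hsin

theorem U_eval_neg_coxEntry_div_two_nonneg {B : Type*} (M : CoxeterMatrix B) {i t : B}
    (hit : i ≠ t) {n : ℤ} (hn₁ : -1 ≤ n) (hn₂ : M i t = 0 ∨ n < M i t) :
    0 ≤ (U ℝ n).eval (-coxEntry M i t / 2) := by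
  rcases eq_or_ne (M i t) 0 with h0 | h0
  · rw [coxEntry, if_pos h0, show -(-2 : ℝ) / 2 = 1 by norm_num, U_eval_one]
    exact_mod_cast (by omega : (0 : ℤ) ≤ n + 1)
  · rw [coxEntry, if_neg h0, show -(-2 * cos (π / M i t)) / 2 = cos (π / M i t) by ring]
    have := M.off_diagonal i t hit
    exact U_real_cos_pi_div_nonneg (by omega) hn₁ (hn₂.resolve_left h0)

end Chebyshev

namespace CoxeterSystem

variable {B : Type*} {M : CoxeterMatrix B} {W : Type*} [Group W] (cs : CoxeterSystem M W)

local prefix:100 "s" => cs.simple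
local prefix:100 "π" => cs.wordProd
local prefix:100 "ℓ" => cs.length

theorem length_wordProd_alternatingWord_le (i t : B) (k : ℕ) :
    ℓ (π (alternatingWord i t k)) ≤ k :=
  (cs.length_wordProd_le _).trans_eq (length_alternatingWord i t k)

theorem simple_mul_wordProd_alternatingWord_succ {i t x : B} (hx : x = i ∨ x = t) (k : ℕ) :
    s x * π (alternatingWord i t (k + 1)) = π (alternatingWord i t (k + 2)) ∨
      s x * π (alternatingWord i t (k + 1)) = π (alternatingWord i t k) := by
  rw [alternatingWord_succ' i t (k + 1), wordProd_cons, alternatingWord_succ' i t k,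
    wordProd_cons]
  by_cases hk : Even k <;> rcases hx with rfl | rfl <;>
    simp [hk, Nat.even_add_one, simple_mul_simple_cancel_left]

theorem exists_factorization_alternatingWord_succ {w v : W} {i t x : B} {k : ℕ}
    (hw : w = v * π (alternatingWord i t (k + 1))) (hlen : ℓ w = ℓ v + (k + 1))
    (hx : x = i ∨ x = t) (hvx : ℓ (v * s x) < ℓ v) :
    w = v * s x * π (alternatingWord i t (k + 2)) ∧ ℓ w = ℓ (v * s x) + (k + 2) := by
  have hvx' : ℓ (v * s x) + 1 = ℓ v := by
    have := cs.length_mul_simple v x; omega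
  have hw' : w = v * s x * (s x * π (alternatingWord i t (k + 1))) := by
    rw [hw, mul_assoc, simple_mul_simple_cancel_left]
  rcases cs.simple_mul_wordProd_alternatingWord_succ hx k with h | h
  · rw [← h]; exact ⟨hw', by omega⟩
  · rw [h] at hw'
    have := hw' ▸ cs.length_mul_le (v * s x) (π (alternatingWord i t k))
    have := cs.length_wordProd_alternatingWord_le i t k
    omega

theorem eq_zero_or_lt_of_length_mul_wordProd_alternatingWord {v : W} {i t : B} {k : ℕ}
    (hlen : ℓ (v * π (alternatingWord i t k)) = ℓ v + k)
    (hi : ℓ (v * π (alternatingWord i t k)) < ℓ (v * π (alternatingWord i t k) * s i)) :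
    M i t = 0 ∨ k < M i t := by
  by_contra! h
  obtain ⟨hM, hk⟩ := h
  have hred : cs.IsReduced (alternatingWord i t k) := by
    have := cs.length_mul_le v (π (alternatingWord i t k))
    have := cs.length_wordProd_alternatingWord_le i t k
    rw [IsReduced, length_alternatingWord]
    omega
  obtain rfl : k = M i t := by
    by_contra hne
    exact cs.not_isReduced_alternatingWord i t hM (by omega) hred
  obtain ⟨m, hm⟩ := Nat.exists_eq_succ_of_ne_zero hM
  -- the braid relation moves `s i` to the right end of the word, where it cancels
  have hbraid : π (alternatingWord i t (M i t)) * s i = π (alternatingWord i t m) := by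
    have := cs.wordProd_braidWord_eq i t
    rw [braidWord, braidWord, M.symmetric t i, hm, alternatingWord_succ t i, wordProd_concat]
      at this
    rw [hm, this, simple_mul_simple_cancel_right]
  rw [mul_assoc, hbraid] at hi
  have := cs.length_mul_le v (π (alternatingWord i t m))
  have := cs.length_wordProd_alternatingWord_le i t m
  omega

theorem exists_mul_wordProd_alternatingWord {w : W} {i t : B} (hi : ℓ w < ℓ (w * s i))
    (ht : ℓ (w * s t) < ℓ w) :
    ∃ v k, w = v * π (alternatingWord i t k) ∧ ℓ v < ℓ w ∧ ℓ v < ℓ (v * s i) ∧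
      ℓ v < ℓ (v * s t) ∧ (M i t = 0 ∨ k < M i t) := by
  classical
  let IsFactor (n : ℕ) : Prop := ∃ v k, w = v * π (alternatingWord i t (k + 1)) ∧
    ℓ w = ℓ v + (k + 1) ∧ ℓ v = n
  have hfactor : ∃ n, IsFactor n := ⟨_, w * s t, 0, by simp [alternatingWord, mul_assoc],
    by have := cs.length_mul_simple w t; omega, rfl⟩
  obtain ⟨v, k, hw, hlen, hv⟩ := Nat.find_spec hfactor
  have hasc : ∀ x, x = i ∨ x = t → ℓ v < ℓ (v * s x) := by
    intro x hx
    by_contra! hvx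
    replace hvx : ℓ (v * s x) < ℓ v := lt_of_le_of_ne hvx (cs.length_mul_simple_ne v x)
    obtain ⟨hw', hlen'⟩ := cs.exists_factorization_alternatingWord_succ hw hlen hx hvx
    exact Nat.find_min' hfactor ⟨v * s x, k + 1, hw', hlen', rfl⟩ |>.not_gt (hv ▸ hvx)
  refine ⟨v, k + 1, hw, by omega, hasc i (Or.inl rfl), hasc t (Or.inr rfl), ?_⟩
  rw [hw] at hi hlen
  exact cs.eq_zero_or_lt_of_length_mul_wordProd_alternatingWord hlen hi

end CoxeterSystem

section TitsRepresentation

open CoxeterSystem Polynomial.Chebyshev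

variable {B : Type*} {W : Type*} [Group W] {ρ : W →* ((B → ℝ) ≃ₗ[ℝ] (B → ℝ))}

theorem simple_apply_simple_apply {M : CoxeterMatrix B} (cs : CoxeterSystem M W) (i : B)
    (v : B → ℝ) : ρ (cs.simple i) (ρ (cs.simple i) v) = v := by
  rw [← LinearEquiv.mul_apply, ← map_mul, cs.simple_mul_simple_self, map_one]
  rfl

variable [DecidableEq B]

theorem apply_mem_rootSet (u : W) {α : B → ℝ} (hα : α ∈ rootSet ρ) : ρ u α ∈ rootSet ρ := by
  obtain ⟨v, s, rfl⟩ := hα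
  exact ⟨u * v, s, by simp⟩

theorem simpleRoot_mem_posRootSet (s : B) : simpleRoot s ∈ posRootSet ρ :=
  ⟨⟨1, s, by simp⟩, fun j => (Pi.single_nonneg.mpr zero_le_one : (0 : B → ℝ) ≤ Pi.single s 1) j⟩

theorem notMem_negRootSet_of_mem_posRootSet {α : B → ℝ} (hα : α ∈ posRootSet ρ) :
    α ∉ negRootSet ρ := by
  intro hα'
  obtain ⟨⟨u, s, rfl⟩, hpos⟩ := hα
  have hzero : ρ u (simpleRoot s) = 0 :=
    le_antisymm (fun j => by simpa using hα'.2 j) hpos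
  simp [simpleRoot] at hzero

def inversionSet (ρ : W →* ((B → ℝ) ≃ₗ[ℝ] (B → ℝ))) (w : W) : Set (B → ℝ) :=
  {α | α ∈ posRootSet ρ ∧ ρ w α ∈ negRootSet ρ}

variable [Fintype B] {M : CoxeterMatrix B} {cs : CoxeterSystem M W}
  (hρ : ∀ (s : B) (v : B → ℝ), ρ (cs.simple s) v = v - coxForm M (simpleRoot s) v • simpleRoot s)
include hρ

theorem simple_apply_simpleRoot (s t : B) :
    ρ (cs.simple t) (simpleRoot s) = simpleRoot s + (-coxEntry M s t) • simpleRoot t := by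
  rw [hρ, coxForm_simpleRoot_simpleRoot, coxEntry_comm, neg_smul, sub_eq_add_neg]

theorem simple_apply_simpleRoot_self (s : B) :
    ρ (cs.simple s) (simpleRoot s) = -simpleRoot s := by
  rw [simple_apply_simpleRoot hρ, coxEntry_self]
  module

theorem simple_apply_of_ne {s j : B} (hj : j ≠ s) (v : B → ℝ) : ρ (cs.simple s) v j = v j := by
  simp [hρ, simpleRoot, hj]

theorem coxForm_apply_self (u : W) (v : B → ℝ) :
    coxForm M (ρ u v) (ρ u v) = coxForm M v v := by
  induction u using cs.simple_induction_left with
  | one => simp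
  | mul_simple_left u s ih =>
    rw [map_mul, LinearEquiv.mul_apply, hρ, coxForm_sub_smul_self M _ _
      (by rw [coxForm_simpleRoot_simpleRoot, coxEntry_self]), ih]

theorem coxForm_self_of_mem_rootSet {α : B → ℝ} (hα : α ∈ rootSet ρ) : coxForm M α α = 2 := by
  obtain ⟨u, s, rfl⟩ := hα
  rw [coxForm_apply_self hρ, coxForm_simpleRoot_simpleRoot, coxEntry_self]

theorem apply_alternatingWord_simpleRoot {i t : B} {x : ℝ} (hx : -coxEntry M i t = 2 * x)
    (n : ℕ) :
    ρ (cs.wordProd (alternatingWord i t (2 * n))) (simpleRoot i) =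
        (U ℝ (2 * n)).eval x • simpleRoot i + (U ℝ (2 * n - 1)).eval x • simpleRoot t ∧
      ρ (cs.wordProd (alternatingWord i t (2 * n + 1))) (simpleRoot i) =
        (U ℝ (2 * n)).eval x • simpleRoot i + (U ℝ (2 * n + 1)).eval x • simpleRoot t := by
  have hti : ρ (cs.simple t) (simpleRoot i) = simpleRoot i + (2 * x) • simpleRoot t := by
    rw [simple_apply_simpleRoot hρ, hx]
  have hit : ρ (cs.simple i) (simpleRoot t) = simpleRoot t + (2 * x) • simpleRoot i := by
    rw [simple_apply_simpleRoot hρ, coxEntry_comm, hx]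
  have hU (m : ℤ) : (U ℝ (m + 2)).eval x = 2 * x * (U ℝ (m + 1)).eval x - (U ℝ m).eval x := by
    simp [U_add_two]
  induction n with
  | zero => simp [alternatingWord, hti]
  | succ n ih =>
    have hidx : (2 * ((n + 1 : ℕ) : ℤ)) = 2 * n + 2 := by push_cast; ring
    have heven : ρ (cs.wordProd (alternatingWord i t (2 * (n + 1)))) (simpleRoot i) =
        (U ℝ (2 * n + 2)).eval x • simpleRoot i + (U ℝ (2 * n + 1)).eval x • simpleRoot t := by
      rw [show 2 * (n + 1) = 2 * n + 1 + 1 by ring, alternatingWord_succ', wordProd_cons, map_mul,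
        LinearEquiv.mul_apply, ih.2, if_neg (Nat.not_even_two_mul_add_one n), map_add, map_smul,
        map_smul, simple_apply_simpleRoot_self hρ, hit, hU]
      module
    rw [hidx, show (2 * n + 2 - 1 : ℤ) = 2 * n + 1 by ring]
    refine ⟨heven, ?_⟩
    rw [alternatingWord_succ', wordProd_cons, map_mul, LinearEquiv.mul_apply, heven,
      if_pos (even_two_mul _), map_add, map_smul, map_smul, simple_apply_simpleRoot_self hρ, hti,
      show (2 * n + 2 + 1 : ℤ) = 2 * n + 1 + 2 by ring, hU (2 * n + 1),
      show (2 * n + 1 + 1 : ℤ) = 2 * n + 2 by ring]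
    module

theorem exists_nonneg_apply_alternatingWord_simpleRoot {i t : B} (hit : i ≠ t) {k : ℕ}
    (hk : M i t = 0 ∨ k < M i t) :
    ∃ a b : ℝ, 0 ≤ a ∧ 0 ≤ b ∧
      ρ (cs.wordProd (alternatingWord i t k)) (simpleRoot i) =
        a • simpleRoot i + b • simpleRoot t := by
  have hx : -coxEntry M i t = 2 * (-coxEntry M i t / 2) := by ring
  have hU {n : ℤ} (hn₁ : -1 ≤ n) (hn₂ : n ≤ k) := U_eval_neg_coxEntry_div_two_nonneg M hit hn₁
    (hk.imp_right fun h => hn₂.trans_lt (by exact_mod_cast h))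
  obtain ⟨n, rfl | rfl⟩ := Nat.even_or_odd' k
  · exact ⟨_, _, hU (by omega) (by push_cast; omega), hU (by omega) (by push_cast; omega),
      (apply_alternatingWord_simpleRoot hρ hx n).1⟩
  · exact ⟨_, _, hU (by omega) (by push_cast; omega), hU (by omega) (by push_cast; omega),
      (apply_alternatingWord_simpleRoot hρ hx n).2⟩

theorem zero_le_apply_simpleRoot_of_length_lt {w : W} {i : B}
    (hi : cs.length w < cs.length (w * cs.simple i)) : 0 ≤ ρ w (simpleRoot i) := by
  induction hn : cs.length w using Nat.strong_induction_on generalizing w i with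
  | _ n ih =>
    by_cases hw : w = 1
    · subst hw
      simp [simpleRoot]
    obtain ⟨t, ht⟩ := cs.exists_rightDescent_of_ne_one hw
    have hit : i ≠ t := by rintro rfl; exact lt_asymm hi ht
    obtain ⟨v, k, rfl, hv, hvi, hvt, hk⟩ := cs.exists_mul_wordProd_alternatingWord hi ht
    obtain ⟨a, b, ha, hb, hab⟩ := exists_nonneg_apply_alternatingWord_simpleRoot hρ hit hk
    rw [map_mul, LinearEquiv.mul_apply, hab, map_add, map_smul, map_smul]
    exact add_nonneg (smul_nonneg ha (ih _ (hn ▸ hv) hvi rfl))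
      (smul_nonneg hb (ih _ (hn ▸ hv) hvt rfl))

theorem apply_simpleRoot_mem_posRootSet {w : W} {i : B}
    (hi : cs.length w < cs.length (w * cs.simple i)) : ρ w (simpleRoot i) ∈ posRootSet ρ :=
  ⟨⟨w, i, rfl⟩, zero_le_apply_simpleRoot_of_length_lt hρ hi⟩

theorem apply_simpleRoot_mem_negRootSet {w : W} {i : B}
    (hi : cs.length (w * cs.simple i) < cs.length w) : ρ w (simpleRoot i) ∈ negRootSet ρ := by
  have hpos := apply_simpleRoot_mem_posRootSet hρ (w := w * cs.simple i) (i := i)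
    (by rwa [cs.simple_mul_simple_cancel_right])
  rwa [map_mul, LinearEquiv.mul_apply, simple_apply_simpleRoot_self hρ, map_neg] at hpos

theorem mem_posRootSet_or_mem_negRootSet {α : B → ℝ} (hα : α ∈ rootSet ρ) :
    α ∈ posRootSet ρ ∨ α ∈ negRootSet ρ := by
  obtain ⟨w, i, rfl⟩ := hα
  rcases cs.length_mul_simple w i with h | h
  · exact Or.inl (apply_simpleRoot_mem_posRootSet hρ (by omega))
  · exact Or.inr (apply_simpleRoot_mem_negRootSet hρ (by omega))

theorem eq_simpleRoot_of_simple_apply_mem_negRootSet {α : B → ℝ} {i : B}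
    (hα : α ∈ posRootSet ρ) (h : ρ (cs.simple i) α ∈ negRootSet ρ) : α = simpleRoot i := by
  have hα_eq : α = α i • simpleRoot i := funext fun j => by
    by_cases hj : j = i
    · subst hj; simp [simpleRoot]
    · have := h.2 j
      rw [Pi.neg_apply, simple_apply_of_ne hρ hj] at this
      simp only [simpleRoot, Pi.smul_apply, Pi.single_apply, hj, if_false, smul_zero]
      linarith [hα.2 j]
  have hnorm := coxForm_self_of_mem_rootSet hρ hα.1
  rw [hα_eq, coxForm_smul_self, coxForm_simpleRoot_simpleRoot, coxEntry_self] at hnorm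
  have hαi : α i = 1 := by nlinarith [hα.2 i]
  rwa [hαi, one_smul] at hα_eq

theorem simple_apply_mem_posRootSet {α : B → ℝ} {i : B} (hα : α ∈ posRootSet ρ)
    (hne : α ≠ simpleRoot i) : ρ (cs.simple i) α ∈ posRootSet ρ :=
  (mem_posRootSet_or_mem_negRootSet hρ (apply_mem_rootSet _ hα.1)).resolve_right fun h =>
    hne (eq_simpleRoot_of_simple_apply_mem_negRootSet hρ hα h)

theorem inversionSet_mul_simple {w : W} {i : B}
    (hi : cs.length w < cs.length (w * cs.simple i)) :
    inversionSet ρ (w * cs.simple i) =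
      insert (simpleRoot i) (ρ (cs.simple i) '' inversionSet ρ w) := by
  ext α
  constructor
  · rintro ⟨hpos, hneg⟩
    by_cases hαi : α = simpleRoot i
    · exact Or.inl hαi
    refine Or.inr ⟨ρ (cs.simple i) α, ⟨simple_apply_mem_posRootSet hρ hpos hαi, ?_⟩,
      simple_apply_simple_apply cs i α⟩
    rwa [← LinearEquiv.mul_apply, ← map_mul]
  · rintro (rfl | ⟨β, ⟨hβpos, hβneg⟩, rfl⟩)
    · exact ⟨simpleRoot_mem_posRootSet i, apply_simpleRoot_mem_negRootSet hρ
        (by rwa [cs.simple_mul_simple_cancel_right])⟩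
    have hβi : β ≠ simpleRoot i := by
      rintro rfl
      exact notMem_negRootSet_of_mem_posRootSet (apply_simpleRoot_mem_posRootSet hρ hi) hβneg
    refine ⟨simple_apply_mem_posRootSet hρ hβpos hβi, ?_⟩
    rwa [map_mul, LinearEquiv.mul_apply, simple_apply_simple_apply]

theorem simpleRoot_notMem_simple_image (S : Set (B → ℝ)) (hS : S ⊆ posRootSet ρ) (i : B) :
    simpleRoot i ∉ ρ (cs.simple i) '' S := by
  rintro ⟨β, hβ, hβi⟩
  have hβ_eq : β = -simpleRoot i := by
    rw [← simple_apply_simple_apply cs i β, hβi, simple_apply_simpleRoot_self hρ]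
  have := (hS hβ).2 i
  norm_num [hβ_eq, simpleRoot] at this

theorem encard_inversionSet (w : W) : (inversionSet ρ w).encard = cs.length w := by
  induction hn : cs.length w generalizing w with
  | zero =>
    obtain rfl := cs.length_eq_zero_iff.mp hn
    simpa [Set.encard_eq_zero, Set.eq_empty_iff_forall_notMem, inversionSet] using
      fun α hα => notMem_negRootSet_of_mem_posRootSet hα
  | succ n ih =>
    have hw : w ≠ 1 := by rintro rfl; simp at hn
    obtain ⟨t, ht⟩ := cs.exists_rightDescent_of_ne_one hw
    have hv : cs.length (w * cs.simple t) = n := by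
      have := cs.length_mul_simple w t
      have : cs.length (w * cs.simple t) < cs.length w := ht
      omega
    have hasc : cs.length (w * cs.simple t) < cs.length (w * cs.simple t * cs.simple t) := by
      rw [cs.simple_mul_simple_cancel_right]; exact ht
    rw [← cs.simple_mul_simple_cancel_right (w := w) t, inversionSet_mul_simple hρ hasc,
      Set.encard_insert_of_notMem (simpleRoot_notMem_simple_image hρ _ (fun _ h => h.1) t),
      (ρ (cs.simple t)).injective.encard_image, ih _ hv]
    rfl

end TitsRepresentation

theorem finite_inversions_and_card_eq_length
    {B : Type*} [Fintype B] [DecidableEq B] (M : CoxeterMatrix B)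
    {W : Type*} [Group W] (cs : CoxeterSystem M W)
    (ρ : W →* ((B → ℝ) ≃ₗ[ℝ] (B → ℝ)))
    (hρ : ∀ (s : B) (v : B → ℝ),
      ρ (cs.simple s) v = v - coxForm M (simpleRoot s) v • simpleRoot s)
    (w : W) :
    {α | α ∈ posRootSet ρ ∧ ρ w α ∈ negRootSet ρ}.Finite ∧
      {α | α ∈ posRootSet ρ ∧ ρ w α ∈ negRootSet ρ}.ncard = cs.length w := by
  have h : (inversionSet ρ w).encard = cs.length w := encard_inversionSet hρ w
  refine ⟨Set.finite_of_encard_eq_coe h, ?_⟩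
  change (inversionSet ρ w).ncard = _
  rw [Set.ncard_def, h, ENat.toNat_natCast]
end

section
/- The set ∪_{v ∈ I\{0}} H_v of complex-valued real-linear functionals vanishing on some nonzero element of the closed imaginary cone is a closed subset of (RΛ)*_C = Hom_R(RΛ, C); consequently Υ = (RΛ)*_C \ ∪_{v ∈ I\{0}} H_v is open. -/
/-- The set `K = {v ∈ ℝ_{≥0}Λ : B(v, α_s) ≤ 0 for all s}`. -/
noncomputable def coneK {B : Type*} [Fintype B] [DecidableEq B] (M : CoxeterMatrix B) :
    Set (B → ℝ) :=
  {v | (∀ i, 0 ≤ v i) ∧ ∀ s, coxForm M v (simpleRoot s) ≤ 0}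

/-- The closed imaginary cone `I = closure (W · K)`. -/
noncomputable def imagCone {B : Type*} [Fintype B] [DecidableEq B] (M : CoxeterMatrix B)
    {W : Type*} [Group W] (ρ : W →* ((B → ℝ) ≃ₗ[ℝ] (B → ℝ))) : Set (B → ℝ) :=
  closure {v | ∃ (w : W), ∃ k ∈ coneK M, v = ρ w k}


/-- The pairing between the complexified dual space `(RΛ)*_ℂ = Hom_ℝ(RΛ, ℂ)` (in coordinates:
`z : B → ℂ`, with `z i = Z(α_i)`) and `RΛ`. -/
noncomputable def evalC {B : Type*} [Fintype B] (z : B → ℂ) (v : B → ℝ) : ℂ := ∑ i, (v i : ℂ) * z i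

/-!
Both the closed imaginary cone `I` and the condition `Z(v) = 0` are invariant under positive
scaling of `v`, so only the compact set of unit vectors of `I` matters. The union of the `H_v`
is then the projection to `(RΛ)*_ℂ` of a closed subset of `(I ∩ sphere 0 1) × (RΛ)*_ℂ`, and
projection along a compact factor is a closed map.
-/

section ConicZeroSet

variable {E X F : Type*} [NormedAddCommGroup E] [NormedSpace ℝ E] [ProperSpace E]
  [TopologicalSpace X] [AddCommGroup F] [Module ℝ F] [TopologicalSpace F] [T1Space F]

theorem isClosed_setOf_exists_mem_ne_zero_eq_zero {C : Set E} (hC : IsClosed C)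
    (hC_smul : ∀ c : ℝ, 0 < c → ∀ v ∈ C, c • v ∈ C) {f : X → E → F}
    (hf : Continuous (Function.uncurry f))
    (hf_smul : ∀ x (c : ℝ) v, f x (c • v) = c • f x v) :
    IsClosed {x | ∃ v ∈ C, v ≠ 0 ∧ f x v = 0} := by
  set S : Set E := C ∩ Metric.sphere 0 1
  have : CompactSpace S :=
    isCompact_iff_compactSpace.mp ((isCompact_sphere 0 1).inter_left hC)
  have hzero : IsClosed {p : S × X | f p.2 p.1 = 0} :=
    isClosed_singleton.preimage
      (hf.comp (continuous_snd.prodMk (continuous_subtype_val.comp continuous_fst)))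
  convert isClosedMap_snd_of_compactSpace _ hzero using 1
  ext x
  constructor
  · rintro ⟨v, hvC, hv0, hxv⟩
    have hv : 0 < ‖v‖ := norm_pos_iff.mpr hv0
    refine ⟨(⟨‖v‖⁻¹ • v, hC_smul _ (inv_pos.mpr hv) v hvC, ?_⟩, x), ?_, rfl⟩
    · simp [norm_smul, hv.ne']
    · simp [hf_smul, hxv]
  · rintro ⟨⟨⟨v, hvC, hv1⟩, x⟩, hxv, rfl⟩
    refine ⟨v, hvC, ?_, hxv⟩
    rintro rfl
    simp at hv1

end ConicZeroSet

theorem coxForm_smul_left {B : Type*} [Fintype B] (M : CoxeterMatrix B) (c : ℝ)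
    (v w : B → ℝ) :
    coxForm M (c • v) w = c * coxForm M v w := by
  simp only [coxForm, Finset.mul_sum, Pi.smul_apply, smul_eq_mul, mul_assoc]

theorem smul_mem_coneK {B : Type*} [Fintype B] [DecidableEq B] (M : CoxeterMatrix B)
    {c : ℝ} (hc : 0 ≤ c) {k : B → ℝ} (hk : k ∈ coneK M) : c • k ∈ coneK M :=
  ⟨fun i => mul_nonneg hc (hk.1 i),
    fun s => (coxForm_smul_left M c k _).trans_le (mul_nonpos_of_nonneg_of_nonpos hc (hk.2 s))⟩

theorem smul_mem_imagCone {B : Type*} [Fintype B] [DecidableEq B] (M : CoxeterMatrix B)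
    {W : Type*} [Group W] (ρ : W →* ((B → ℝ) ≃ₗ[ℝ] (B → ℝ)))
    {c : ℝ} (hc : 0 ≤ c) {v : B → ℝ} (hv : v ∈ imagCone M ρ) :
    c • v ∈ imagCone M ρ := by
  refine map_mem_closure (continuous_const_smul c) hv ?_
  rintro _ ⟨w, k, hk, rfl⟩
  exact ⟨w, c • k, smul_mem_coneK M hc hk, (map_smul (ρ w) c k).symm⟩

theorem evalC_smul {B : Type*} [Fintype B] (z : B → ℂ) (c : ℝ) (v : B → ℝ) :
    evalC z (c • v) = c • evalC z v := by
  simp only [evalC, Finset.smul_sum, Pi.smul_apply, smul_eq_mul, Complex.real_smul,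
    Complex.ofReal_mul, mul_assoc]

theorem continuous_evalC {B : Type*} [Fintype B] :
    Continuous (Function.uncurry (evalC (B := B))) := by
  unfold evalC
  fun_prop

theorem isClosed_imagCone_hyperplanes_general
    {B : Type*} [Fintype B] [DecidableEq B] (M : CoxeterMatrix B)
    {W : Type*} [Group W]
    (ρ : W →* ((B → ℝ) ≃ₗ[ℝ] (B → ℝ))) :
    IsClosed {z : B → ℂ | ∃ v ∈ imagCone M ρ, v ≠ 0 ∧ evalC z v = 0} ∧
      IsOpen {z : B → ℂ | ∀ v ∈ imagCone M ρ, v ≠ 0 → evalC z v ≠ 0} := by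
  have hclosed := isClosed_setOf_exists_mem_ne_zero_eq_zero (C := imagCone M ρ) isClosed_closure
    (fun c hc _ hv => smul_mem_imagCone M ρ hc.le hv) continuous_evalC evalC_smul
  refine ⟨hclosed, ?_⟩
  convert hclosed.isOpen_compl using 1
  ext z
  simp

theorem isClosed_imagCone_hyperplanes
    {B : Type*} [Fintype B] [DecidableEq B] (M : CoxeterMatrix B)
    {W : Type*} [Group W] (cs : CoxeterSystem M W)
    (ρ : W →* ((B → ℝ) ≃ₗ[ℝ] (B → ℝ)))
    (hρ : ∀ (s : B) (v : B → ℝ),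
      ρ (cs.simple s) v = v - coxForm M (simpleRoot s) v • simpleRoot s) :
    IsClosed {z : B → ℂ | ∃ v ∈ imagCone M ρ, v ≠ 0 ∧ evalC z v = 0} ∧
      IsOpen {z : B → ℂ | ∀ v ∈ imagCone M ρ, v ≠ 0 → evalC z v ≠ 0} :=
  isClosed_imagCone_hyperplanes_general M ρ
end

section
/- The fusion ring of the Temperley–Lieb–Jones category TLJ_n at q = e^{iπ/n} is isomorphic to Z[d]/⟨Δ_{n-1}(d)⟩, where Δ_k are the Chebyshev polynomials of the second kind defined by Δ_0 = 1, Δ_1 = d, Δ_{k+1} = dΔ_k - Δ_{k-1}; the class of the simple object Π_k maps to Δ_k(d). Under the Frobenius–Perron dimension homomorphism, FPdim(Π_k) = Δ_k(2cos(π/n)). -/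
/-!
In the fusion ring, `Π₁ ⊗ Πₖ = Πₖ₋₁ ⊕ Πₖ₊₁` for `0 < k < n - 2` and `Π₁ ⊗ Πₙ₋₂ = Πₙ₋₃`, so with
`d = [Π₁]` (and `d = 0` when `n = 2`) the classes are `[Πₖ] = Δₖ(d)` and `Δₙ₋₁(d) = 0`.
Evaluation at `d` is therefore a surjection `ℤ[d]/⟨Δₙ₋₁⟩ → R` between free `ℤ`-modules of rank
`n - 1`, hence an isomorphism.

A ring homomorphism `φ` to `ℝ` is determined by `x = φ d`, a root of `Δₙ₋₁` with `Δₖ(x) > 0` for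
`k ≤ n - 2`. Such an `x` lies in `(-2, 2)`; writing `x = 2 cos α` with `0 < α < π`, the identity
`Δₖ(x) sin α = sin ((k + 1) α)` gives `sin (m α) > 0` for `0 < m < n` and `sin (n α) = 0`,
which forces `α = π / n`.
-/

/-- The Chebyshev-like polynomials Δ_k ∈ ℤ[d] of the second kind:
Δ_0 = 1, Δ_1 = d, Δ_{k+1} = d·Δ_k - Δ_{k-1}. -/
noncomputable def cheb : ℕ → Polynomial ℤ
  | 0 => 1
  | 1 => Polynomial.X
  | (k + 2) => Polynomial.X * cheb (k + 1) - cheb k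

/-- The index set of the Temperley–Lieb–Jones fusion rule:
`Π_a ⊗ Π_b ≅ ⊕ Π_k` over `k = |a-b|, |a-b|+2, …, min (a+b) (2n-4-(a+b))`. -/
def fusSet (n a b : ℕ) : Finset ℕ :=
  (Finset.Icc (max a b - min a b) (min (a + b) (2 * n - 4 - (a + b)))).filter
    (fun k => (a + b + k) % 2 = 0)

open Polynomial Real

lemma cheb_add_two (k : ℕ) : cheb (k + 2) = X * cheb (k + 1) - cheb k := rfl

lemma cheb_eq_S : ∀ k : ℕ, cheb k = Chebyshev.S ℤ k
  | 0 => by simp [cheb]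
  | 1 => by simp [cheb]
  | k + 2 => by
    rw [cheb_add_two, cheb_eq_S k, cheb_eq_S (k + 1)]
    push_cast
    exact (Chebyshev.S_add_two ℤ k).symm

lemma monic_cheb_and_natDegree_cheb : ∀ k, (cheb k).Monic ∧ (cheb k).natDegree = k
  | 0 => ⟨monic_one, natDegree_one⟩
  | 1 => ⟨monic_X, natDegree_X⟩
  | k + 2 => by
    obtain ⟨hm₁, hd₁⟩ := monic_cheb_and_natDegree_cheb (k + 1)
    obtain ⟨hm₀, hd₀⟩ := monic_cheb_and_natDegree_cheb k
    have hm : (X * cheb (k + 1)).Monic := monic_X.mul hm₁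
    have hd : (X * cheb (k + 1)).natDegree = k + 2 := by
      rw [natDegree_mul X_ne_zero hm₁.ne_zero, natDegree_X, hd₁, add_comm]
    have hlt : (cheb k).natDegree < (X * cheb (k + 1)).natDegree := by omega
    rw [cheb_add_two, ← hd]
    exact ⟨hm.sub_of_left (degree_lt_degree hlt), natDegree_sub_eq_left_of_natDegree_lt hlt⟩

lemma aeval_cheb_add_two {A : Type*} [CommRing A] (x : A) (k : ℕ) :
    aeval x (cheb (k + 2)) = x * aeval x (cheb (k + 1)) - aeval x (cheb k) := by
  simp [cheb_add_two]

lemma aeval_cheb_neg {A : Type*} [CommRing A] (x : A) :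
    ∀ k, aeval (-x) (cheb k) = (-1) ^ k * aeval x (cheb k)
  | 0 => by simp [cheb]
  | 1 => by simp [cheb]
  | k + 2 => by
    rw [aeval_cheb_add_two, aeval_cheb_add_two, aeval_cheb_neg x (k + 1), aeval_cheb_neg x k]
    ring

lemma aeval_cheb_two_mul_cos (θ : ℝ) (k : ℕ) :
    aeval (2 * cos θ) (cheb k) * sin θ = sin ((k + 1) * θ) := by
  simp [cheb_eq_S, Chebyshev.aeval_S]

lemma one_le_aeval_cheb_of_two_le {x : ℝ} (hx : 2 ≤ x) (k : ℕ) : 1 ≤ aeval x (cheb k) := by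
  suffices ∀ k, 1 ≤ aeval x (cheb k) ∧ aeval x (cheb k) ≤ aeval x (cheb (k + 1)) from (this k).1
  intro k
  induction k with
  | zero => simp only [cheb, map_one, aeval_X]; constructor <;> linarith
  | succ k ih =>
    refine ⟨ih.1.trans ih.2, ?_⟩
    rw [aeval_cheb_add_two]
    nlinarith [ih.1, ih.2]

lemma aeval_cheb_ne_zero_of_two_le_abs {x : ℝ} (hx : 2 ≤ |x|) (k : ℕ) :
    aeval x (cheb k) ≠ 0 := by
  rcases le_abs'.mp hx with hx | hx
  · rw [← neg_neg x, aeval_cheb_neg]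
    exact mul_ne_zero (pow_ne_zero _ (by norm_num))
      (zero_lt_one.trans_le (one_le_aeval_cheb_of_two_le (le_neg_of_le_neg hx) k)).ne'
  · exact (zero_lt_one.trans_le (one_le_aeval_cheb_of_two_le hx k)).ne'

lemma nat_mul_lt_pi_of_sin_pos {α : ℝ} (hαπ : α < π) (N : ℕ)
    (hsin : ∀ m < N, 0 < sin ((m + 1) * α)) : N * α < π := by
  induction N with
  | zero => simpa using pi_pos
  | succ N ih =>
    have hN : N * α < π := ih fun m hm ↦ hsin m (by omega)
    by_contra! h
    -- `(N + 1) α` would lie in `[π, 2π)`, where the sine is not positive.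
    have hle : sin ((N + 1) * α - π) ≥ 0 := by
      apply sin_nonneg_of_nonneg_of_le_pi <;> push_cast at h ⊢ <;> nlinarith
    have := hsin N (by omega)
    rw [sin_sub_pi] at hle
    linarith

theorem eq_two_mul_cos_pi_div_of_aeval_cheb {n : ℕ} (hn : 2 ≤ n) {x : ℝ}
    (hpos : ∀ k ≤ n - 2, 0 < aeval x (cheb k)) (hroot : aeval x (cheb (n - 1)) = 0) :
    x = 2 * cos (π / n) := by
  obtain ⟨hx₁, hx₂⟩ := abs_lt.mp <| not_le.mp fun h ↦ aeval_cheb_ne_zero_of_two_le_abs h _ hroot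
  set α := arccos (x / 2)
  have hxα : x = 2 * cos α := by rw [cos_arccos] <;> linarith
  have hα₀ : 0 < α := arccos_pos.mpr (by linarith)
  have hαπ : α < π := arccos_lt_pi.mpr (by linarith)
  have hsinα : 0 < sin α := sin_pos_of_pos_of_lt_pi hα₀ hαπ
  have hsin (k : ℕ) : sin ((k + 1) * α) = aeval x (cheb k) * sin α := by
    rw [hxα, aeval_cheb_two_mul_cos]
  have hlt : ((n - 1 : ℕ) : ℝ) * α < π :=
    nat_mul_lt_pi_of_sin_pos hαπ _ fun m hm ↦ by
      rw [hsin]; exact mul_pos (hpos m (by omega)) hsinα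
  have hn₁ : ((n - 1 : ℕ) : ℝ) + 1 = n := by rw [Nat.cast_sub (by omega)]; push_cast; ring
  have hzero : sin (n * α - π) = 0 := by rw [sin_sub_pi, ← hn₁, hsin, hroot, zero_mul, neg_zero]
  have hnα_pos : 0 < n * α := by positivity
  have hnα_lt : n * α < 2 * π := by rw [← hn₁]; linarith
  have hnα : n * α - π = 0 :=
    (sin_eq_zero_iff_of_lt_of_lt (by linarith) (by linarith)).mp hzero
  rw [hxα]
  congr 2
  field_simp
  linarith

lemma sin_nat_mul_pi_div_pos {n m : ℕ} (hm₀ : 0 < m) (hm : m < n) : 0 < sin (m * (π / n)) := by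
  have hn : (0 : ℝ) < n := by exact_mod_cast hm₀.trans hm
  refine sin_pos_of_pos_of_lt_pi (by positivity) ?_
  rw [mul_div_assoc', div_lt_iff₀ hn]
  exact mul_lt_mul_of_pos_right (by exact_mod_cast hm) pi_pos |>.trans_eq (mul_comm _ _)

lemma aeval_cheb_two_mul_cos_pi_div_pos {n k : ℕ} (hk : k + 1 < n) :
    0 < aeval (2 * cos (π / n)) (cheb k) := by
  have h := aeval_cheb_two_mul_cos (π / n) k
  have h₁ : 0 < sin (π / n) := by simpa using sin_nat_mul_pi_div_pos one_pos (by omega : 1 < n)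
  have hk₁ : 0 < sin ((k + 1) * (π / n)) := by exact_mod_cast sin_nat_mul_pi_div_pos k.succ_pos hk
  exact pos_of_mul_pos_left (h ▸ hk₁) h₁.le

lemma aeval_cheb_two_mul_cos_pi_div_eq_zero {n : ℕ} (hn : 2 ≤ n) :
    aeval (2 * cos (π / n)) (cheb (n - 1)) = 0 := by
  have h := aeval_cheb_two_mul_cos (π / n) (n - 1)
  have h₁ : 0 < sin (π / n) := by simpa using sin_nat_mul_pi_div_pos one_pos (by omega : 1 < n)
  have hn₀ : (n : ℝ) ≠ 0 := by positivity
  rw [Nat.cast_sub (by omega), Nat.cast_one, sub_add_cancel, mul_div_cancel₀ _ hn₀, sin_pi] at h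
  exact (mul_eq_zero.mp h).resolve_right h₁.ne'

lemma fusSet_one_add_one {n k : ℕ} (hk : k + 4 ≤ n) : fusSet n 1 (k + 1) = {k, k + 2} := by
  ext j
  simp only [fusSet, Finset.mem_filter, Finset.mem_Icc, Finset.mem_insert, Finset.mem_singleton]
  omega

lemma fusSet_add_three_one_add_one (m : ℕ) : fusSet (m + 3) 1 (m + 1) = {m} := by
  ext j
  simp only [fusSet, Finset.mem_filter, Finset.mem_Icc, Finset.mem_singleton]
  omega

lemma aeval_cheb_eq_of_mul_eq {A : Type*} [CommRing A] {b : ℕ → A} {N : ℕ} (h₀ : b 0 = 1)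
    (hrec : ∀ k, k + 2 ≤ N → b 1 * b (k + 1) = b k + b (k + 2)) :
    ∀ k ≤ N, aeval (b 1) (cheb k) = b k
  | 0, _ => by simp [cheb, h₀]
  | 1, _ => by simp [cheb]
  | k + 2, hk => by
    rw [aeval_cheb_add_two, aeval_cheb_eq_of_mul_eq h₀ hrec (k + 1) (by omega),
      aeval_cheb_eq_of_mul_eq h₀ hrec k (by omega), hrec k hk]
    ring

lemma exists_aeval_cheb_eq_of_fusion {R : Type*} [CommRing R] {n : ℕ} (hn : 2 ≤ n) {b : ℕ → R}
    (hone : b 0 = 1)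
    (hfus : ∀ a c, a ≤ n - 2 → c ≤ n - 2 → b a * b c = ∑ k ∈ fusSet n a c, b k) :
    ∃ d : R, (∀ k ≤ n - 2, aeval d (cheb k) = b k) ∧ aeval d (cheb (n - 1)) = 0 := by
  obtain rfl | ⟨m, rfl⟩ : n = 2 ∨ ∃ m, n = m + 3 := by
    rcases hn.eq_or_lt with h | h
    exacts [.inl h.symm, .inr ⟨n - 3, by omega⟩]
  · refine ⟨0, fun k hk ↦ ?_, by simp [cheb]⟩
    obtain rfl : k = 0 := by omega
    simp [cheb, hone]
  · have hb := aeval_cheb_eq_of_mul_eq (N := m + 1) hone fun k hk ↦ by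
      rw [hfus 1 (k + 1) (by omega) (by omega), fusSet_one_add_one (by omega),
        Finset.sum_pair (by omega)]
    refine ⟨b 1, hb, ?_⟩
    rw [show m + 3 - 1 = m + 2 by omega, aeval_cheb_add_two, hb _ le_rfl, hb m (by omega),
      hfus 1 (m + 1) (by omega) (by omega), fusSet_add_three_one_add_one, Finset.sum_singleton,
      sub_self]

lemma Module.Basis.surjective_of_forall_mem_range {ι A M N : Type*} [Semiring A]
    [AddCommMonoid M] [Module A M] [AddCommMonoid N] [Module A N] (v : Basis ι A M)
    (f : N →ₗ[A] M) (hv : ∀ i, v i ∈ LinearMap.range f) : Function.Surjective f := by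
  refine LinearMap.range_eq_top.mp (top_unique ?_)
  rw [← v.span_eq, Submodule.span_le]
  rintro _ ⟨i, rfl⟩
  exact hv i

theorem AdjoinRoot.bijective_liftAlgHom_of_surjective {A R : Type*} [CommRing A] [Nontrivial A]
    [CommRing R] [Algebra A R] [Module.Free A R] [Module.Finite A R] {f : A[X]} (hf : f.Monic)
    (hrank : f.natDegree ≤ Module.finrank A R) {d : R} (hd : aeval d f = 0)
    (hsurj : Function.Surjective (aeval d : A[X] → R)) :
    Function.Bijective (liftAlgHom f (Algebra.ofId A R) d hd) := by
  have := hf.free_adjoinRoot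
  have := hf.finite_adjoinRoot
  refine OrzechProperty.bijective_of_surjective_of_finrank_le
    (liftAlgHom f (Algebra.ofId A R) d hd).toLinearMap (fun r ↦ ?_) ?_
  · obtain ⟨p, rfl⟩ := hsurj r
    exact ⟨mk f p, rfl⟩
  · exact (finrank_quotient_span_eq_natDegree' hf).trans_le hrank

lemma map_aeval_int {R S : Type*} [Ring R] [Ring S] (φ : R →+* S) (x : R) (p : ℤ[X]) :
    φ (aeval x p) = aeval (φ x) p :=
  ringHom_eval₂_intCastRingHom p φ x

theorem TLJ_fusionRing_iso_and_FPdim (n : ℕ) (hn : 2 ≤ n)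
    (R : Type*) [CommRing R] (b : ℕ → R)
    (hb : ∃ v : Module.Basis (Fin (n - 1)) ℤ R, ∀ k : Fin (n - 1), v k = b k)
    (hone : b 0 = 1)
    (hfus : ∀ a c, a ≤ n - 2 → c ≤ n - 2 → b a * b c = ∑ k ∈ fusSet n a c, b k) :
    (∃ e : R ≃+* (Polynomial ℤ ⧸ Ideal.span {cheb (n - 1)}),
        ∀ k ≤ n - 2, e (b k) = Ideal.Quotient.mk (Ideal.span {cheb (n - 1)}) (cheb k)) ∧
      (∃! φ : R →+* ℝ, ∀ k ≤ n - 2, 0 < φ (b k)) ∧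
      (∀ φ : R →+* ℝ, (∀ k ≤ n - 2, 0 < φ (b k)) →
        ∀ k ≤ n - 2, φ (b k) =
          Polynomial.aeval (2 * Real.cos (Real.pi / n)) (cheb k)) := by
  obtain ⟨v, hv⟩ := hb
  obtain ⟨d, hd, hroot⟩ := exists_aeval_cheb_eq_of_fusion hn hone hfus
  have hsurj : Function.Surjective (aeval d : ℤ[X] → R) :=
    v.surjective_of_forall_mem_range (aeval d).toLinearMap fun k ↦
      ⟨cheb k, by simp [hv, hd k (by omega)]⟩
  have := Module.Free.of_basis v
  have := Module.Finite.of_basis v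
  obtain ⟨hmonic, hdeg⟩ := monic_cheb_and_natDegree_cheb (n - 1)
  let L := AlgEquiv.ofBijective _ <| AdjoinRoot.bijective_liftAlgHom_of_surjective hmonic
    (by rw [hdeg, Module.finrank_eq_card_basis v, Fintype.card_fin]) hroot hsurj
  have hL (k : ℕ) (hk : k ≤ n - 2) : L.symm (b k) = AdjoinRoot.mk _ (cheb k) := by
    rw [← hd k hk]
    exact L.symm_apply_eq.mpr rfl
  have hφd (φ : R →+* ℝ) (hφ : ∀ k ≤ n - 2, 0 < φ (b k)) : φ d = 2 * cos (π / n) :=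
    eq_two_mul_cos_pi_div_of_aeval_cheb hn
      (fun k hk ↦ by rw [← map_aeval_int, hd k hk]; exact hφ k hk)
      (by rw [← map_aeval_int, hroot, map_zero])
  let φ₀ : R →+* ℝ := (AdjoinRoot.lift (algebraMap ℤ ℝ) _
    (aeval_cheb_two_mul_cos_pi_div_eq_zero hn)).comp L.symm.toRingHom
  have hφ₀ (k : ℕ) (hk : k ≤ n - 2) : 0 < φ₀ (b k) := by
    simpa [φ₀, hL k hk, aeval_def] using aeval_cheb_two_mul_cos_pi_div_pos (by omega)
  refine ⟨⟨L.symm.toRingEquiv, hL⟩, ⟨φ₀, hφ₀, fun ψ hψ ↦ ?_⟩, fun φ hφ k hk ↦ ?_⟩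
  · ext r
    obtain ⟨p, rfl⟩ := hsurj r
    rw [map_aeval_int, map_aeval_int, hφd ψ hψ, hφd φ₀ hφ₀]
  · rw [← hd k hk, map_aeval_int, hφd φ hφ]
end

section
/- Let Λ_C = ⊕_{s∈S} K₀(C)·α_s be the free module over the fusion ring K₀(C), with symmetric K₀(C)-bilinear form B_C(α_s, α_s) = 2·[1], B_C(α_s, α_t) = -[Π(e)] if e = (s,t) is an edge, and 0 otherwise, where FPdim(Π(e)) = 2cos(π/m_{s,t}) (≥ 2 when m_{s,t} = ∞). Then the assignment s·v = v - B_C(α_s, v)·α_s defines a K₀(C)-linear representation of the Coxeter group W on Λ_C, and this representation is faithful. -/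
/-!
STATEMENT 17: Let Λ_C = ⊕_{s∈S} K₀(C)·α_s be the free module over the fusion ring K₀(C),
with the symmetric K₀(C)-bilinear form B_C(α_s, α_s) = 2·[1], B_C(α_s, α_t) = -[Π(e)] on
edges and 0 otherwise, where FPdim(Π(e)) = 2cos(π/m_{s,t}) (and ≥ 2 when m_{s,t} = ∞).
Then s·v = v - B_C(α_s, v)·α_s defines a K₀(C)-linear representation of the Coxeter group W
on Λ_C, and this representation is faithful.

Here the fusion ring K₀(C) is modelled by a commutative ring R together with its
Frobenius–Perron dimension ring homomorphism φ : R → ℝ; the form coefficients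
c s t = B_C(α_s, α_t) satisfy c s s = 2, symmetry, the Chebyshev relation
Δ_{m_{s,t}-1}(c s t) = 0 (which holds for the classes ±[Π(e)] in the fusion ring K₀(C(Γ))),
φ(c s t) = -2cos(π/m_{s,t}) for m_{s,t} < ∞, and φ(c s t) ≤ -2 for m_{s,t} = ∞
(encoded as m_{s,t} = 0).
-/

/-!
The reflections `σ_s v = v - B(α_s, v) α_s` satisfy the Coxeter relations over any commutative
ring: `σ_s² = 1` because `B(α_s, α_s) = 2`, and `(σ_s σ_t)^n` is an explicit expression in the
Chebyshev `S`-polynomials at `c s t` which collapses to the identity when `S_{m-1}(c s t) = 0`.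

Faithfulness is Tits' argument, run on the coordinates after applying `φ`: if `ℓ(w s) > ℓ(w)`,
then every coordinate of `φ(w α_s)` is nonnegative. For `w ≠ 1` with right descent `t`, write
`w = u v` with `v` in the parabolic subgroup generated by `s, t`, `ℓ(w) = ℓ(u) + ℓ(v)`, and `u`
without right descent in `{s, t}`. As `ℓ(w s) > ℓ(w)`, `v` is an alternating word of length
`j < m_{s,t}`, and `v α_s = S_j(-c s t) α + S_{j-1}(-c s t) α'` with `{α, α'} = {α_s, α_t}`.
The reals `S_n(2 cos(π/m)) = sin((n+1)π/m) / sin(π/m)` for `-1 ≤ n < m`, and `S_n(x)` for `x ≥ 2`,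
`n ≥ -1`, are nonnegative, so induction on the length applies to `u`. Finally, if `ρ(w) = 1`
with `w ≠ 1` and `t` a right descent of `w`, then `α_t = ρ(w) α_t = -ρ(w s_t) α_t` would have a
nonpositive `t`-coordinate.
-/

open Polynomial Polynomial.Chebyshev Module

theorem cheb_eq_S_s17 : ∀ n : ℕ, cheb n = S ℤ n
  | 0 => by simp [cheb]
  | 1 => by simp [cheb]
  | n + 2 => by
    rw [cheb, cheb_eq_S_s17 n, cheb_eq_S_s17 (n + 1)]
    push_cast
    rw [S_add_two]

theorem aeval_cheb {R : Type*} [CommRing R] (x : R) (n : ℕ) :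
    aeval x (cheb n) = (S R n).eval x := by
  rw [cheb_eq_S_s17, aeval_S]

namespace Polynomial.Chebyshev

theorem map_eval_S {R R' : Type*} [CommRing R] [CommRing R'] (f : R →+* R') (n : ℤ) (x : R) :
    f ((S R n).eval x) = (S R' n).eval (f x) := by
  rw [← eval₂_at_apply, ← eval_map, map_S]

section OrderedRing

variable {K : Type*} [CommRing K] [LinearOrder K] [IsStrictOrderedRing K] {x : K}

theorem S_eval_sub_one_nonneg_and_le_of_two_le (hx : 2 ≤ x) (n : ℕ) :
    0 ≤ (S K (n - 1 : ℤ)).eval x ∧ (S K (n - 1 : ℤ)).eval x ≤ (S K n).eval x := by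
  induction n with
  | zero => simp
  | succ n ih =>
    have hrec : (S K (n + 1 : ℤ)).eval x = x * (S K n).eval x - (S K (n - 1 : ℤ)).eval x := by
      simp [S_add_one]
    push_cast
    simp only [add_sub_cancel_right, hrec]
    constructor <;> nlinarith [ih.1, ih.2]

theorem S_eval_nonneg_of_two_le (hx : 2 ≤ x) {n : ℤ} (hn : -1 ≤ n) : 0 ≤ (S K n).eval x := by
  obtain ⟨k, rfl⟩ : ∃ k : ℕ, n = k - 1 := ⟨(n + 1).toNat, by omega⟩
  exact (S_eval_sub_one_nonneg_and_le_of_two_le hx k).1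

end OrderedRing

open Real in
theorem S_eval_two_mul_cos_pi_div_nonneg {m : ℕ} (hm : 2 ≤ m) {n : ℤ} (hn : -1 ≤ n)
    (hnm : n < m) : 0 ≤ (S ℝ n).eval (2 * cos (π / m)) := by
  have hm0 : (0 : ℝ) < m := by positivity
  have hsin : 0 < sin (π / m) :=
    sin_pos_of_pos_of_lt_pi (by positivity) (div_lt_self pi_pos (by exact_mod_cast hm))
  have hangle : 0 ≤ sin ((n + 1) * (π / m)) := by
    apply sin_nonneg_of_nonneg_of_le_pi
    · have : (0 : ℝ) ≤ n + 1 := by exact_mod_cast (by omega : (0 : ℤ) ≤ n + 1)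
      positivity
    · have : (n + 1 : ℝ) ≤ m := by exact_mod_cast (by omega : n + 1 ≤ (m : ℤ))
      rw [← mul_div_assoc, div_le_iff₀ hm0]
      nlinarith [pi_pos]
  rw [← S_two_mul_real_cos] at hangle
  exact nonneg_of_mul_nonneg_left hangle hsin

end Polynomial.Chebyshev

theorem dotProductEquiv_apply_single_one {B R : Type*} [Fintype B] [DecidableEq B] [CommRing R]
    (v : B → R) (s : B) : dotProductEquiv R B v (Pi.single s 1) = v s := by
  simp [dotProduct_single]

section SimpleReflection

variable {B R : Type*} [Fintype B] [DecidableEq B] [CommRing R]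
  (c : B → B → R) (hdiag : ∀ s, c s s = 2)

noncomputable def simpleReflection (s : B) : (B → R) ≃ₗ[R] (B → R) :=
  reflection ((dotProductEquiv_apply_single_one (c s) s).trans (hdiag s))

theorem simpleReflection_apply (s : B) (v : B → R) :
    simpleReflection c hdiag s v = v - (c s ⬝ᵥ v) • Pi.single s 1 :=
  reflection_apply _ _

theorem simpleReflection_mul_self (s : B) :
    simpleReflection c hdiag s * simpleReflection c hdiag s = 1 :=
  LinearEquiv.ext (involutive_reflection _)

variable {c}

theorem simpleReflection_mul_pow_apply {s t : B} (hst : c t s = c s t) (n : ℕ) (v : B → R) :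
    ((simpleReflection c hdiag s * simpleReflection c hdiag t) ^ n) v =
      v - ((S R (n - 1)).eval (c s t) * ((S R (n - 1)).eval (c s t) * (c s ⬝ᵥ v)
            - (S R n).eval (c s t) * (c t ⬝ᵥ v))) • Pi.single s 1
        + ((S R (n - 1)).eval (c s t) * ((S R (n - 2)).eval (c s t) * (c s ⬝ᵥ v)
            - (S R (n - 1)).eval (c s t) * (c t ⬝ᵥ v))) • Pi.single t 1 := by
  induction n with
  | zero => simp
  | succ n ih =>
    rw [pow_succ', LinearEquiv.mul_apply, ih, LinearEquiv.mul_apply]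
    simp only [simpleReflection_apply, map_add, map_sub, map_smul, dotProduct_single, mul_one,
      hdiag, hst]
    have hrec₁ := congr_arg (eval (c s t)) (S_add_one R n)
    have hrec₂ := congr_arg (eval (c s t)) (S_sub_one R (n - 1))
    have cassini := congr_arg (eval (c s t)) (S_sq_add_S_sq R (n - 1))
    simp only [eval_sub, eval_mul, eval_X, eval_add, eval_pow, eval_one, sub_add_cancel,
      sub_sub, one_add_one_eq_two] at hrec₁ hrec₂ cassini
    push_cast at hrec₁ ⊢
    rw [show (n : ℤ) + 1 - 1 = n by ring, show (n : ℤ) + 1 - 2 = n - 1 by ring, hrec₁]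
    set b := (S R (n - 1 : ℤ)).eval (c s t)
    match_scalars
    · rfl
    · linear_combination (c s ⬝ᵥ v - c s t * c t ⬝ᵥ v) * cassini + c s t * b * c s ⬝ᵥ v * hrec₂
    · linear_combination c t ⬝ᵥ v * cassini - b * c s ⬝ᵥ v * hrec₂

theorem simpleReflection_mul_pow_eq_one {s t : B} (hst : c t s = c s t) {m : ℕ}
    (hm : (S R (m - 1)).eval (c s t) = 0) :
    (simpleReflection c hdiag s * simpleReflection c hdiag t) ^ m = 1 :=
  LinearEquiv.ext fun v => by simp [simpleReflection_mul_pow_apply hdiag hst, hm]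

theorem simpleReflection_apply_smul_add_smul {s t : B} (a b : R) :
    simpleReflection c hdiag t (a • Pi.single s 1 + b • Pi.single t 1) =
      a • Pi.single s 1 + (-c t s * a - b) • Pi.single t 1 := by
  simp only [simpleReflection_apply, dotProduct_add, dotProduct_smul, dotProduct_single, hdiag,
    smul_eq_mul, mul_one]
  module

end SimpleReflection

section TitsRepresentation

variable {B W R : Type*} [Fintype B] [DecidableEq B] [Group W] [CommRing R] {M : CoxeterMatrix B}
  (cs : CoxeterSystem M W) {c : B → B → R} (hdiag : ∀ s, c s s = 2)
  (hsymm : ∀ s t, c s t = c t s) (hcheb : ∀ s t, s ≠ t → (S R (M s t - 1)).eval (c s t) = 0)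
include hsymm hcheb

theorem isLiftable_simpleReflection : M.IsLiftable (simpleReflection c hdiag) := by
  intro s t
  obtain rfl | hst := eq_or_ne s t
  · rw [M.diagonal, pow_one, simpleReflection_mul_self]
  · exact simpleReflection_mul_pow_eq_one hdiag (hsymm t s) (hcheb s t hst)

noncomputable def titsRep : W →* ((B → R) ≃ₗ[R] (B → R)) :=
  cs.lift ⟨simpleReflection c hdiag, isLiftable_simpleReflection hdiag hsymm hcheb⟩

theorem titsRep_simple (s : B) :
    titsRep cs hdiag hsymm hcheb (cs.simple s) = simpleReflection c hdiag s :=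
  cs.lift_apply_simple _ s

end TitsRepresentation

namespace CoxeterSystem

variable {B W : Type*} [Group W] {M : CoxeterMatrix B} (cs : CoxeterSystem M W)

theorem exists_eq_mul_wordProd_not_isRightDescent (s t : B) (w : W) :
    ∃ (u : W) (l : List B), (∀ i ∈ l, i = s ∨ i = t) ∧ w = u * cs.wordProd l ∧
      cs.length w = cs.length u + l.length ∧
      ¬ cs.IsRightDescent u s ∧ ¬ cs.IsRightDescent u t := by
  induction h : cs.length w using Nat.strong_induction_on generalizing w with
  | _ n ih =>
  by_cases hd : ∃ y, (y = s ∨ y = t) ∧ cs.IsRightDescent w y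
  · obtain ⟨y, hy, hwy⟩ := hd
    have hlen := cs.isRightDescent_iff.mp hwy
    obtain ⟨u, l, hl, hw, hlen', hus, hut⟩ := ih _ (by omega) (w * cs.simple y) rfl
    refine ⟨u, l.concat y, ?_, ?_, ?_, hus, hut⟩
    · simpa [or_imp, forall_and] using And.intro hl hy
    · rw [cs.wordProd_concat, ← mul_assoc, ← hw, cs.simple_mul_simple_cancel_right]
    · simp only [List.length_concat]
      omega
  · push Not at hd
    exact ⟨w, [], by simp, by simp, by simp [h], hd s (.inl rfl), hd t (.inr rfl)⟩

theorem eq_alternatingWord_of_isReduced_concat {s t : B} {l : List B}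
    (hl : ∀ i ∈ l, i = s ∨ i = t) (hred : cs.IsReduced (l.concat s)) :
    l = alternatingWord s t l.length := by
  induction l using List.reverseRecOn generalizing s t with
  | nil => rfl
  | append_singleton l a ih =>
    have ha : a = t := by
      refine (hl a (by simp)).resolve_left ?_
      rintro rfl
      have hle := cs.length_wordProd_le l
      rw [IsReduced, cs.wordProd_concat, wordProd_append, wordProd_singleton,
        simple_mul_simple_cancel_right] at hred
      simp only [List.length_concat, List.length_append, List.length_singleton] at hred
      omega
    subst ha
    have hred' : cs.IsReduced (l.concat a) := by
      have := hred.take (l ++ [a]).length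
      rwa [List.concat_eq_append, List.take_left, ← List.concat_eq_append] at this
    have hl' := ih (fun i hi => (hl i (by simp [hi])).symm) hred'
    rw [List.length_append, List.length_singleton, alternatingWord_succ, ← hl',
      List.concat_eq_append]

theorem exists_eq_mul_wordProd_alternatingWord {w : W} {s t : B} (hs : ¬ cs.IsRightDescent w s)
    (ht : cs.IsRightDescent w t) :
    ∃ (u : W) (j : ℕ), w = u * cs.wordProd (alternatingWord s t j) ∧ cs.length u < cs.length w ∧
      (M s t ≠ 0 → j < M s t) ∧ ¬ cs.IsRightDescent u s ∧ ¬ cs.IsRightDescent u t := by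
  obtain ⟨u, l, hl, rfl, hlen, hus, hut⟩ := cs.exists_eq_mul_wordProd_not_isRightDescent s t w
  have hl0 : l ≠ [] := by
    rintro rfl
    simp only [wordProd_nil, mul_one] at ht
    exact hut ht
  have hred : cs.IsReduced (l.concat s) := by
    have h1 := cs.not_isRightDescent_iff.mp hs
    have h2 := cs.length_mul_le u (cs.wordProd (l.concat s))
    have h3 := cs.length_wordProd_le (l.concat s)
    rw [show u * cs.wordProd (l.concat s) = u * cs.wordProd l * cs.simple s by
      rw [cs.wordProd_concat, mul_assoc]] at h2
    rw [List.length_concat] at h3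
    rw [IsReduced, List.length_concat]
    omega
  have hlalt := cs.eq_alternatingWord_of_isReduced_concat hl hred
  refine ⟨u, l.length, by rw [← hlalt], ?_, fun hM => ?_, hus, hut⟩
  · have := List.length_pos_iff.mpr hl0
    omega
  · by_contra! hle
    apply cs.not_isReduced_alternatingWord t s (m := l.length + 1) (by rwa [M.symmetric])
      (by rw [M.symmetric]; omega)
    rwa [alternatingWord_succ, ← hlalt]

end CoxeterSystem

section Positivity

variable {B W R : Type*} [Group W] [CommRing R] {M : CoxeterMatrix B} {c : B → B → R}
  (φ : R →+* ℝ)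
  (hφfin : ∀ s t, s ≠ t → M s t ≠ 0 → φ (c s t) = -2 * Real.cos (Real.pi / (M s t)))
  (hφinf : ∀ s t, s ≠ t → M s t = 0 → φ (c s t) ≤ -2)

include hφfin hφinf in
theorem map_S_eval_neg_nonneg {s t : B} (hst : s ≠ t) {n : ℤ} (hn : -1 ≤ n)
    (hnM : M s t ≠ 0 → n < M s t) : 0 ≤ φ ((S R n).eval (-c s t)) := by
  rw [map_eval_S, map_neg]
  obtain hM | hM := eq_or_ne (M s t) 0
  · exact S_eval_nonneg_of_two_le (by linarith [hφinf s t hst hM]) hn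
  · rw [hφfin s t hst hM, neg_mul, neg_neg]
    have := M.off_diagonal s t hst
    exact S_eval_two_mul_cos_pi_div_nonneg (by omega) hn (hnM hM)

variable [Fintype B] [DecidableEq B] (cs : CoxeterSystem M W) {hdiag : ∀ s, c s s = 2}
  {ρ : W →* ((B → R) ≃ₗ[R] (B → R))} (hρ : ∀ s, ρ (cs.simple s) = simpleReflection c hdiag s)
  (hsymm : ∀ s t, c s t = c t s)

include hρ in
theorem apply_wordProd_alternatingWord_single {s t : B} (hst : c t s = c s t) (j : ℕ) :
    ρ (cs.wordProd (CoxeterSystem.alternatingWord s t j)) (Pi.single s 1) =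
      (S R j).eval (-c s t) • Pi.single (if Even j then s else t) 1 +
        (S R (j - 1)).eval (-c s t) • Pi.single (if Even j then t else s) 1 := by
  induction j with
  | zero => simp [CoxeterSystem.alternatingWord]
  | succ j ih =>
    have hrec := congr_arg (eval (-c s t)) (S_add_one R j)
    simp only [eval_sub, eval_mul, eval_X] at hrec
    rw [CoxeterSystem.alternatingWord_succ', cs.wordProd_cons, map_mul, LinearEquiv.mul_apply, ih]
    push_cast
    rw [add_sub_cancel_right, hrec]
    by_cases hj : Even j
    · simp only [hj, if_true, Nat.even_add_one, not_true, if_false, hρ,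
        simpleReflection_apply_smul_add_smul, hst]
      module
    · simp only [hj, if_false, Nat.even_add_one, not_false_eq_true, if_true, hρ]
      rw [simpleReflection_apply_smul_add_smul]
      module

include hρ hsymm hφfin hφinf

theorem map_apply_single_nonneg_of_not_isRightDescent (w : W) (s : B)
    (hs : ¬ cs.IsRightDescent w s) (x : B) : 0 ≤ φ (ρ w (Pi.single s 1) x) := by
  induction h : cs.length w using Nat.strong_induction_on generalizing w s with
  | _ n ih =>
  obtain rfl | hw := eq_or_ne w 1
  · rw [map_one, LinearEquiv.coe_one, id, Pi.single_apply]
    split_ifs <;> simp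
  obtain ⟨t, ht⟩ := cs.exists_rightDescent_of_ne_one hw
  have hts : t ≠ s := by rintro rfl; exact hs ht
  obtain ⟨u, j, rfl, hlt, hj, hus, hut⟩ := cs.exists_eq_mul_wordProd_alternatingWord hs ht
  have hu : ∀ y, (y = s ∨ y = t) → 0 ≤ φ (ρ u (Pi.single y 1) x) := by
    rintro y (rfl | rfl)
    exacts [ih _ (h ▸ hlt) u _ hus rfl, ih _ (h ▸ hlt) u _ hut rfl]
  rw [map_mul, LinearEquiv.mul_apply, apply_wordProd_alternatingWord_single cs hρ (hsymm t s),
    map_add, map_smul, map_smul]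
  simp only [Pi.add_apply, Pi.smul_apply, smul_eq_mul, map_add, map_mul]
  have hS₁ := map_S_eval_neg_nonneg φ hφfin hφinf hts.symm (n := j) (by omega)
    (fun hM => by exact_mod_cast hj hM)
  have hS₂ := map_S_eval_neg_nonneg φ hφfin hφinf hts.symm (n := j - 1) (by omega)
    (fun hM => by linarith [(by exact_mod_cast hj hM : (j : ℤ) < M s t)])
  refine add_nonneg (mul_nonneg hS₁ (hu _ ?_)) (mul_nonneg hS₂ (hu _ ?_)) <;>
    split_ifs <;> simp

theorem injective_of_apply_simple_eq_simpleReflection : Function.Injective ρ := by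
  refine (injective_iff_map_eq_one ρ).mpr fun w hw => ?_
  by_contra hne
  obtain ⟨t, ht⟩ := cs.exists_rightDescent_of_ne_one hne
  have hpos := map_apply_single_nonneg_of_not_isRightDescent φ hφfin hφinf cs hρ hsymm
    (w * cs.simple t) t (cs.isRightDescent_iff_not_isRightDescent_mul.mp ht) t
  rw [map_mul, hw, one_mul, hρ, simpleReflection, reflection_apply_self] at hpos
  simp only [Pi.neg_apply, Pi.single_eq_same, map_neg, map_one] at hpos
  linarith

end Positivity

theorem fusion_Tits_representation_faithful
    {B : Type*} [Fintype B] [DecidableEq B] (M : CoxeterMatrix B)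
    {W : Type*} [Group W] (cs : CoxeterSystem M W)
    (R : Type*) [CommRing R] (φ : R →+* ℝ)
    (c : B → B → R)
    (hsymm : ∀ s t, c s t = c t s)
    (hdiag : ∀ s, c s s = 2)
    (hcheb : ∀ s t, s ≠ t → M s t ≠ 0 → Polynomial.aeval (c s t) (cheb (M s t - 1)) = 0)
    (hφfin : ∀ s t, s ≠ t → M s t ≠ 0 →
      φ (c s t) = -2 * Real.cos (Real.pi / (M s t)))
    (hφinf : ∀ s t, s ≠ t → M s t = 0 → φ (c s t) ≤ -2) :
    ∃ ρ : W →* ((B → R) ≃ₗ[R] (B → R)),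
      (∀ (s : B) (v : B → R),
        ρ (cs.simple s) v = v - (∑ t, c s t * v t) • (Pi.single s (1 : R) : B → R)) ∧
      Function.Injective ρ := by
  have hchebS : ∀ s t, s ≠ t → (S R (M s t - 1)).eval (c s t) = 0 := by
    intro s t hst
    obtain hM | hM := eq_or_ne (M s t) 0
    · simp [hM]
    · simpa [aeval_cheb, Nat.cast_sub (Nat.one_le_iff_ne_zero.mpr hM)] using hcheb s t hst hM
  have hρ := titsRep_simple cs hdiag hsymm hchebS
  refine ⟨titsRep cs hdiag hsymm hchebS, fun s v => ?_,
    injective_of_apply_simple_eq_simpleReflection φ hφfin hφinf cs hρ hsymm⟩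
  rw [hρ, simpleReflection_apply]
  rfl
end
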